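/- arXiv:2405.19367 — 5 statements merged into one kernel-verified Lean document; each statement's English description precedes it below -/
import Mathlib

section
/- If (X, ζ, E) is a soft convex space, then for each parameter e ∈ E, the family ζ(e) = {Ω(e) : (Ω, E) ∈ ζ} is a convex structure on X; that is, ζ(e) contains ∅ and X, is closed under arbitrary intersections, and is closed under unions of upward directed subfamilies. -/
def IsSoftConvexStructure {X E : Type*} (ζ : Set (E → Set X)) : Prop :=
  (fun _ : E => (∅ : Set X)) ∈ ζ ∧
  (fun _ : E => (Set.univ : Set X)) ∈ ζ ∧
  (∀ S ⊆ ζ, (fun e => ⋂ Ω ∈ S, Ω e) ∈ ζ) ∧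
  (∀ S ⊆ ζ, DirectedOn (· ≤ ·) S → (fun e => ⋃ Ω ∈ S, Ω e) ∈ ζ)

def softHull {X E : Type*} (ζ : Set (E → Set X)) (Ω : E → Set X) : E → Set X :=
  fun e => ⋂ O ∈ {O | O ∈ ζ ∧ Ω ≤ O}, O e

def IsConvexStructure {X : Type*} (𝒞 : Set (Set X)) : Prop :=
  (∅ : Set X) ∈ 𝒞 ∧ (Set.univ : Set X) ∈ 𝒞 ∧
  (∀ S ⊆ 𝒞, ⋂₀ S ∈ 𝒞) ∧
  (∀ S ⊆ 𝒞, DirectedOn (· ⊆ ·) S → ⋃₀ S ∈ 𝒞)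

/-- Each parameter family ζ(e) of a soft convex structure is a convex structure. -/
theorem parameter_convex_structure {X E : Type*} (ζ : Set (E → Set X))
    (hζ : IsSoftConvexStructure ζ) (e : E) :
    IsConvexStructure {A : Set X | ∃ Ω ∈ ζ, Ω e = A} := by
  obtain ⟨h0, h1, hinter, hdir⟩ := hζ
  refine ⟨⟨_, h0, rfl⟩, ⟨_, h1, rfl⟩, ?_, ?_⟩
  · intro S hS
    refine ⟨_, hinter {Ω ∈ ζ | Ω e ∈ S} (Set.sep_subset _ _), ?_⟩
    ext x
    simp only [Set.mem_iInter, Set.mem_sInter, Set.mem_sep_iff]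
    constructor
    · intro h A hA
      obtain ⟨Ω, hΩζ, rfl⟩ := hS hA
      exact h Ω ⟨hΩζ, hA⟩
    · rintro h Ω ⟨hΩζ, hΩS⟩
      exact h _ hΩS
  · intro S hS hdirS
    set Γ : Set X → E → Set X :=
      fun A => fun e' => ⋂ Θ ∈ {Θ | Θ ∈ ζ ∧ A ⊆ Θ e}, Θ e' with hΓ
    have hΓζ : ∀ A, Γ A ∈ ζ := fun A => hinter _ (fun Θ hΘ => hΘ.1)
    have hΓe : ∀ A ∈ S, Γ A e = A := by
      intro A hA
      obtain ⟨Ω, hΩζ, hΩe⟩ := hS hA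
      apply subset_antisymm
      · calc Γ A e ⊆ Ω e := Set.biInter_subset_of_mem ⟨hΩζ, hΩe.ge⟩
          _ = A := hΩe
      · intro x hx
        simp only [hΓ, Set.mem_iInter]
        exact fun Θ hΘ => hΘ.2 hx
    have hmono : ∀ A B : Set X, A ⊆ B → Γ A ≤ Γ B := by
      intro A B hAB e' x hx
      simp only [hΓ, Set.mem_iInter] at hx ⊢
      exact fun Θ hΘ => hx Θ ⟨hΘ.1, hAB.trans hΘ.2⟩
    refine ⟨_, hdir (Γ '' S) ?_ ?_, ?_⟩
    · rintro _ ⟨A, hA, rfl⟩; exact hΓζ A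
    · rintro _ ⟨A, hA, rfl⟩ _ ⟨B, hB, rfl⟩
      obtain ⟨C, hC, hAC, hBC⟩ := hdirS A hA B hB
      exact ⟨Γ C, ⟨C, hC, rfl⟩, hmono A C hAC, hmono B C hBC⟩
    · ext x
      simp only [Set.mem_iUnion, Set.mem_sUnion]
      constructor
      · rintro ⟨_, ⟨A, hA, rfl⟩, hx⟩
        exact ⟨A, hA, hΓe A hA ▸ hx⟩
      · rintro ⟨A, hA, hx⟩
        exact ⟨Γ A, ⟨A, hA, rfl⟩, (hΓe A hA).symm ▸ hx⟩
end

section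
/- Let f : (X, ζ_X, E) → (Y, ζ_Y, E) be a soft function between soft convex spaces. Then f is soft convex preserving (preimages of members of ζ_Y lie in ζ_X) if and only if f(co_X(Ω)) ⊑ co_Y(f(Ω)) for every soft set Ω on X. -/
lemma softHull_le_self {X E : Type*} {ζ : Set (E → Set X)} {Ω : E → Set X} : Ω ≤ softHull ζ Ω := by
  intro e x hx
  simp only [softHull, Set.mem_iInter]
  intro O hO
  exact hO.2 e hx

lemma softHull_min {X E : Type*} {ζ : Set (E → Set X)} {Ω O : E → Set X}
    (hO : O ∈ ζ) (h : Ω ≤ O) : softHull ζ Ω ≤ O := by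
  intro e x hx
  simp only [softHull, Set.mem_iInter] at hx
  exact hx O ⟨hO, h⟩

lemma softHull_mem {X E : Type*} {ζ : Set (E → Set X)} (hζ : IsSoftConvexStructure ζ)
    (Ω : E → Set X) : softHull ζ Ω ∈ ζ :=
  hζ.2.2.1 {O | O ∈ ζ ∧ Ω ≤ O} (fun _ h => h.1)

/-- f is soft convex preserving iff f(co_X(Ω)) ⊑ co_Y(f(Ω)) for every soft set Ω. -/
theorem scp_iff_hull_image {X Y E : Type*} (ζX : Set (E → Set X)) (ζY : Set (E → Set Y))
    (hζX : IsSoftConvexStructure ζX) (hζY : IsSoftConvexStructure ζY) (f : X → Y) :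
    (∀ Θ ∈ ζY, (fun e => f ⁻¹' Θ e) ∈ ζX) ↔
    (∀ Ω : E → Set X,
      (fun e => f '' softHull ζX Ω e) ≤ softHull ζY (fun e => f '' Ω e)) := by
  constructor
  · intro hscp Ω e y hy
    simp only [softHull, Set.mem_iInter]
    rintro O ⟨hO, hle⟩
    obtain ⟨x, hx, rfl⟩ := hy
    have h1 : Ω ≤ fun e => f ⁻¹' O e := fun e x hx => hle e ⟨x, hx, rfl⟩
    exact softHull_min (hscp O hO) h1 e hx
  · intro h Θ hΘ
    have h1 : softHull ζX (fun e => f ⁻¹' Θ e) = fun e => f ⁻¹' Θ e := by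
      funext e
      apply le_antisymm
      · intro x hx
        have h2 : softHull ζY (fun e => f '' (f ⁻¹' Θ e)) ≤ Θ :=
          softHull_min hΘ (fun e => Set.image_preimage_subset f (Θ e))
        exact h2 e (h (fun e => f ⁻¹' Θ e) e ⟨x, hx, rfl⟩)
      · exact softHull_le_self (ζ := ζX) (Ω := fun e => f ⁻¹' Θ e) e
    rw [← h1]
    exact softHull_mem hζX _
end

section
/- Let d be a soft convexly derived operator on X, ζ_d the induced soft convex structure {Ω : d(Ω) ⊑ Ω}, and co_d the soft convex hull operator of ζ_d. Then co_d(Ω) = d(Ω) ⊔ Ω for every soft set Ω on X. -/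
/-- The soft convex hull of the structure induced by a soft c-derived operator d
satisfies co_d(Ω) = d(Ω) ⊔ Ω. -/
theorem derived_hull_eq {X E : Type u}
    (d : (E → Set X) → (E → Set X))
    (h1 : d (fun _ => (∅ : Set X)) = fun _ => (∅ : Set X))
    (h2 : ∀ Ω O : E → Set X, Ω ≤ O → d Ω ≤ d O)
    (h3 : ∀ Ω : E → Set X, d (fun e => d Ω e ∪ Ω e) ≤ fun e => d Ω e ∪ Ω e)
    (h4 : ∀ {I : Type v} (Ω : I → E → Set X),
      (∀ i j : I, ∃ k : I, Ω i ≤ Ω k ∧ Ω j ≤ Ω k) →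
      d (fun e => ⋃ i, Ω i e) = fun e => ⋃ i, d (Ω i) e) :
    ∀ Ω : E → Set X,
      softHull {O : E → Set X | d O ≤ O} Ω = fun e => d Ω e ∪ Ω e := by
  intro Ω
  funext e
  apply Set.Subset.antisymm
  · -- hull ⊆ d Ω ∪ Ω : since d Ω ∪ Ω is in ζ and contains Ω
    intro x hx
    simp only [softHull, Set.mem_iInter] at hx
    exact hx (fun e => d Ω e ∪ Ω e)
      ⟨h3 Ω, fun e x hx => Or.inr hx⟩
  · -- d Ω ∪ Ω ⊆ hull
    intro x hx
    simp only [softHull, Set.mem_iInter]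
    rintro O ⟨hO, hΩO⟩
    rcases hx with hx | hx
    · exact hO e (h2 Ω O hΩO e hx)
    · exact hΩO e hx
end

section
/- Let (X, d_X, E) and (Y, d_Y, E) be soft c-derived spaces and f : X → Y a soft c-derived preserving function, i.e., f(d_X(Ω)) ⊑ f(Ω) ⊔ d_Y(f(Ω)) for all soft sets Ω on X. Then f is soft convex preserving with respect to the induced soft convex structures ζ_{d_X} = {Ω : d_X(Ω) ⊑ Ω} and ζ_{d_Y} = {Θ : d_Y(Θ) ⊑ Θ}; equivalently, f(co_{d_X}(Ω)) ⊑ co_{d_Y}(f(Ω)) for all soft sets Ω. -/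
/-- An SDP function between soft c-derived spaces is SCP with respect to the induced
soft convex structures, and satisfies f(co_dX(Ω)) ⊑ co_dY(f(Ω)). -/
theorem sdp_implies_scp {X Y E : Type u}
    (dX : (E → Set X) → (E → Set X)) (dY : (E → Set Y) → (E → Set Y))
    (hX1 : dX (fun _ => (∅ : Set X)) = fun _ => (∅ : Set X))
    (hX2 : ∀ Ω O : E → Set X, Ω ≤ O → dX Ω ≤ dX O)
    (hX3 : ∀ Ω : E → Set X, dX (fun e => dX Ω e ∪ Ω e) ≤ fun e => dX Ω e ∪ Ω e)
    (hX4 : ∀ {I : Type v} (Ω : I → E → Set X),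
      (∀ i j : I, ∃ k : I, Ω i ≤ Ω k ∧ Ω j ≤ Ω k) →
      dX (fun e => ⋃ i, Ω i e) = fun e => ⋃ i, dX (Ω i) e)
    (hY1 : dY (fun _ => (∅ : Set Y)) = fun _ => (∅ : Set Y))
    (hY2 : ∀ Ω O : E → Set Y, Ω ≤ O → dY Ω ≤ dY O)
    (hY3 : ∀ Ω : E → Set Y, dY (fun e => dY Ω e ∪ Ω e) ≤ fun e => dY Ω e ∪ Ω e)
    (hY4 : ∀ {I : Type v} (Ω : I → E → Set Y),
      (∀ i j : I, ∃ k : I, Ω i ≤ Ω k ∧ Ω j ≤ Ω k) →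
      dY (fun e => ⋃ i, Ω i e) = fun e => ⋃ i, dY (Ω i) e)
    (f : X → Y)
    (hf : ∀ Ω : E → Set X,
      (fun e => f '' dX Ω e) ≤ fun e => f '' Ω e ∪ dY (fun e' => f '' Ω e') e) :
    (∀ Θ ∈ {Θ : E → Set Y | dY Θ ≤ Θ},
      (fun e => f ⁻¹' Θ e) ∈ {Ω : E → Set X | dX Ω ≤ Ω}) ∧
    (∀ Ω : E → Set X,
      (fun e => f '' softHull {O : E → Set X | dX O ≤ O} Ω e) ≤
        softHull {O : E → Set Y | dY O ≤ O} (fun e => f '' Ω e)) := by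
  have part1 : ∀ Θ ∈ {Θ : E → Set Y | dY Θ ≤ Θ},
      (fun e => f ⁻¹' Θ e) ∈ {Ω : E → Set X | dX Ω ≤ Ω} := by
    intro Θ hΘ e x hx
    have h1 := hf (fun e => f ⁻¹' Θ e) e ⟨x, hx, rfl⟩
    have himg : (fun e => f '' (f ⁻¹' Θ e)) ≤ Θ := fun e => Set.image_preimage_subset f (Θ e)
    rcases h1 with h | h
    · rcases h with ⟨z, hz, hze⟩
      exact himg e ⟨z, hz, hze⟩
    · have := hY2 _ _ himg e (by convert h)
      exact hΘ e this
  refine ⟨part1, ?_⟩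
  intro Ω e y hy
  rcases hy with ⟨x, hx, rfl⟩
  simp only [softHull, Set.mem_iInter]
  intro Θ hΘ
  have hpre := part1 Θ hΘ.1
  have hle : Ω ≤ fun e => f ⁻¹' Θ e := fun e z hz => hΘ.2 e ⟨z, hz, rfl⟩
  have : x ∈ f ⁻¹' Θ e := by
    have := Set.mem_iInter.mp (Set.mem_iInter.mp hx (fun e => f ⁻¹' Θ e)) ⟨hpre, hle⟩
    exact this
  exact this
end

section
/- Let β be a soft convex base on X. Then the family ζ_β of all soft sets expressible as the union of some soft upward directed subfamily of β is a soft convex structure on X. -/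
/-- A soft set is the union of a soft upward directed subfamily of β. -/
def isDirUnionOf {X E : Type*} (β : Set (E → Set X)) (Ω : E → Set X) : Prop :=
  ∃ S ⊆ β, DirectedOn (· ≤ ·) S ∧ Ω = fun e => ⋃ O ∈ S, O e

/-- The family of unions of soft upward directed subfamilies of a soft convex base
is a soft convex structure. -/
theorem base_generates_soft_convex_structure {X E : Type*} (β : Set (E → Set X))
    (h1 : isDirUnionOf β (fun _ => (Set.univ : Set X)))
    (h2 : ∀ S ⊆ β, isDirUnionOf β (fun e => ⋂ Ω ∈ S, Ω e))
    (h3 : ∀ T : Set (E → Set X), DirectedOn (· ≤ ·) T →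
      (∀ Ω ∈ T, isDirUnionOf β Ω) → isDirUnionOf β (fun e => ⋃ Ω ∈ T, Ω e)) :
    IsSoftConvexStructure {Ω : E → Set X | isDirUnionOf β Ω} := by
  classical
  refine ⟨?_, h1, ?_, ?_⟩
  · -- the null soft set is the union of the empty directed subfamily
    exact ⟨∅, Set.empty_subset β, fun x hx => absurd hx (Set.notMem_empty x), by funext e; simp⟩
  · -- closure under intersections
    intro S hS
    have hS' : ∀ Ω ∈ S, isDirUnionOf β Ω := hS
    choose Sfam hsub hdir heq using hS'
    -- the family of "choice intersections"
    set F : Set (E → Set X) :=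
      {Ψ | ∃ f : ∀ Ω, Ω ∈ S → (E → Set X),
        (∀ Ω h, f Ω h ∈ Sfam Ω h) ∧
        Ψ = fun e => ⋂ Ω, ⋂ h : Ω ∈ S, f Ω h e} with hFdef
    have hmem : ∀ Ψ ∈ F, isDirUnionOf β Ψ := by
      rintro Ψ ⟨f, hf, rfl⟩
      have hsub' : {O | ∃ Ω h, f Ω h = O} ⊆ β := by
        rintro O ⟨Ω, h, rfl⟩
        exact hsub Ω h (hf Ω h)
      have key : (fun e => ⋂ Ω, ⋂ h : Ω ∈ S, f Ω h e)
          = fun e => ⋂ O ∈ {O | ∃ Ω h, f Ω h = O}, O e := by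
        funext e; ext x
        simp only [Set.mem_iInter, Set.mem_setOf_eq]
        constructor
        · rintro hx O ⟨Ω, h, rfl⟩
          exact hx Ω h
        · intro hx Ω h
          exact hx _ ⟨Ω, h, rfl⟩
      rw [key]
      exact h2 _ hsub'
    have hFdir : DirectedOn (· ≤ ·) F := by
      rintro Ψ1 ⟨f, hf, rfl⟩ Ψ2 ⟨g, hg, rfl⟩
      have hrel : ∀ Ω (h : Ω ∈ S), ∃ u ∈ Sfam Ω h, f Ω h ≤ u ∧ g Ω h ≤ u :=
        fun Ω h => hdir Ω h _ (hf Ω h) _ (hg Ω h)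
      choose u hu hfu hgu using hrel
      refine ⟨_, ⟨u, hu, rfl⟩, ?_, ?_⟩
      · intro e x hx
        simp only [Set.mem_iInter] at hx ⊢
        exact fun Ω h => hfu Ω h e (hx Ω h)
      · intro e x hx
        simp only [Set.mem_iInter] at hx ⊢
        exact fun Ω h => hgu Ω h e (hx Ω h)
    have hunion : (fun e => ⋂ Ω ∈ S, Ω e) = fun e => ⋃ Ψ ∈ F, Ψ e := by
      funext e; ext x
      simp only [Set.mem_iInter, Set.mem_iUnion]
      constructor
      · intro hx
        have hpick : ∀ Ω (h : Ω ∈ S), ∃ O ∈ Sfam Ω h, x ∈ O e := by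
          intro Ω h
          have hx' := hx Ω h
          have hΩe : Ω e = ⋃ O ∈ Sfam Ω h, O e := congrFun (heq Ω h) e
          rw [hΩe] at hx'
          simpa using hx'
        choose O hO hxO using hpick
        exact ⟨_, ⟨O, hO, rfl⟩, Set.mem_iInter.2 fun Ω => Set.mem_iInter.2 fun h => hxO Ω h⟩
      · rintro ⟨Ψ, ⟨f, hf, rfl⟩, hx⟩ Ω h
        have hΩe : Ω e = ⋃ O ∈ Sfam Ω h, O e := congrFun (heq Ω h) e
        rw [hΩe]
        have hx' := Set.mem_iInter.1 (Set.mem_iInter.1 hx Ω) h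
        exact Set.mem_biUnion (hf Ω h) hx'
    show isDirUnionOf β _
    rw [hunion]
    exact h3 F hFdir hmem
  · -- closure under directed unions
    intro S hS hSdir
    exact h3 S hSdir hS
end
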